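/- arXiv:0803.1672 — 2 statements merged into one kernel-verified Lean document; each statement's English description precedes it below -/
import Mathlib

section
/- Let c > 1 and let X be a c-discrete self-similar fractal generated by V with (0,0) ∈ V and |V| ≥ 2. Then the zeta-dimension of X equals log|V| / log c. -/
open Filter

/-- Stages of the `c`-discrete self-similar fractal generated by `V`. -/
def stage (c : ℤ) (V : Set (ℤ × ℤ)) : ℕ → Set (ℤ × ℤ)
  | 0 => {(0, 0)}
  | i + 1 =>
    stage c V i ∪
      {p | ∃ x ∈ stage c V i, ∃ v ∈ V, p = (x.1 + c ^ i * v.1, x.2 + c ^ i * v.2)}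

/-- `A_{≤n} = {(k,l) ∈ A : |k|+|l| ≤ n}`. -/
def ballSet (A : Set (ℤ × ℤ)) (n : ℕ) : Set (ℤ × ℤ) :=
  {p ∈ A | p.1.natAbs + p.2.natAbs ≤ n}

/-- Zeta-dimension via its entropy characterization (logs base 2). -/
noncomputable def zetaDim (A : Set (ℤ × ℤ)) : ℝ :=
  Filter.limsup (fun n : ℕ => Real.logb 2 ((ballSet A n).ncard) / Real.logb 2 n)
    Filter.atTop

/-!
Since `stage c V (i+1)` is the image of `stage c V i ×ˢ V` under `(x, v) ↦ x + c^i • v`, and this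
map is injective by uniqueness of base-`c` digits (`stage c V i` lies in `[0, c^i)²`), the stages
have `|V|^i` points. A point of the fractal of `ℓ¹`-norm `< c^i` already lies in `stage c V i`,
because a nonzero digit at a position `j ≥ i` contributes at least `c^j`. So for
`c^k ≤ n < c^(k+1)` the ball of radius `n` is squeezed between `stage c V (k-1)` and
`stage c V (k+1)`, giving `log |X_{≤n}| = (k + O(1)) log |V|` and `log n = (k + O(1)) log c`.
-/

theorem Int.eq_and_eq_of_add_mul_eq_add_mul {D a a' b b' : ℤ} (hD : 0 < D)
    (ha : 0 ≤ a ∧ a < D) (ha' : 0 ≤ a' ∧ a' < D) (h : a + D * b = a' + D * b') :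
    a = a' ∧ b = b' := by
  have hdigit : a = a' := by
    rw [← Int.emod_eq_of_lt ha.1 ha.2, ← Int.emod_eq_of_lt ha'.1 ha'.2,
      ← Int.add_mul_emod_self_left a D b, h, Int.add_mul_emod_self_left]
  subst hdigit
  exact ⟨rfl, mul_left_cancel₀ hD.ne' (add_left_cancel h)⟩

theorem tendsto_div_of_linear_bounds {α : Type*} {f : Filter α} {S T k : α → ℝ} {a l : ℝ}
    (ha : 0 < a) (hl : 0 ≤ l) (hT : Tendsto T f atTop)
    (hTk : ∀ᶠ x in f, k x * a ≤ T x ∧ T x ≤ (k x + 1) * a)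
    (hSk : ∀ᶠ x in f, (k x - 1) * l ≤ S x ∧ S x ≤ (k x + 1) * l) :
    Tendsto (fun x => S x / T x) f (nhds (l / a)) := by
  obtain ⟨q, hq, rfl⟩ : ∃ q, 0 ≤ q ∧ l = q * a := ⟨l / a, by positivity, by field_simp⟩
  rw [mul_div_cancel_right₀ q ha.ne']
  have herr : Tendsto (fun x => q * a / T x) f (nhds 0) := tendsto_const_nhds.div_atTop hT
  refine tendsto_of_tendsto_of_tendsto_of_le_of_le'
    (by simpa using tendsto_const_nhds.sub (herr.const_mul 2))
    (by simpa using tendsto_const_nhds.add herr) ?_ ?_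
  all_goals
    filter_upwards [hTk, hSk, hT.eventually_gt_atTop 0] with x ⟨hT₁, hT₂⟩ ⟨hS₁, hS₂⟩ hT₀
  · rw [le_div_iff₀ hT₀, sub_mul, mul_assoc, div_mul_cancel₀ _ hT₀.ne']
    nlinarith
  · rw [div_le_iff₀ hT₀, add_mul, div_mul_cancel₀ _ hT₀.ne']
    nlinarith

theorem logb_bounds_of_pow_bounds {a : ℝ} (ha : 1 < a) {m N i j : ℕ} (hm : 0 < m)
    (hi : m ^ i ≤ N) (hj : N ≤ m ^ j) :
    i * Real.logb a m ≤ Real.logb a N ∧ Real.logb a N ≤ j * Real.logb a m := by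
  have hN : (0 : ℝ) < N := by exact_mod_cast (Nat.pow_pos hm).trans_le hi
  rw [← Real.logb_pow, ← Real.logb_pow]
  exact ⟨Real.logb_le_logb_of_le ha (by positivity) (by exact_mod_cast hi),
    Real.logb_le_logb_of_le ha hN (by exact_mod_cast hj)⟩

namespace stage

variable {c : ℤ} {V : Set (ℤ × ℤ)}

theorem monotone : Monotone (stage c V) :=
  monotone_nat_of_le_succ fun _ => Set.subset_union_left

theorem succ_eq_image (h0 : ((0, 0) : ℤ × ℤ) ∈ V) (i : ℕ) :
    stage c V (i + 1) =
      (fun q : (ℤ × ℤ) × (ℤ × ℤ) => (q.1.1 + c ^ i * q.2.1, q.1.2 + c ^ i * q.2.2)) ''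
        (stage c V i ×ˢ V) := by
  ext p
  constructor
  · rintro (hp | ⟨x, hx, v, hv, rfl⟩)
    · exact ⟨(p, (0, 0)), ⟨hp, h0⟩, by simp⟩
    · exact ⟨(x, v), ⟨hx, hv⟩, rfl⟩
  · rintro ⟨⟨x, v⟩, ⟨hx, hv⟩, rfl⟩
    exact Or.inr ⟨x, hx, v, hv, rfl⟩

variable (hc : 0 < c) (hV : V ⊆ Set.Icc (0 : ℤ) (c - 1) ×ˢ Set.Icc (0 : ℤ) (c - 1))
include hc hV

theorem subset_box : ∀ i, stage c V i ⊆ Set.Ico 0 (c ^ i) ×ˢ Set.Ico 0 (c ^ i)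
  | 0, p, hp => by simp_all [stage]
  | i + 1, p, hp => by
    have hpow : 0 < c ^ i := pow_pos hc i
    rw [pow_succ]
    rcases hp with hp | ⟨x, hx, v, hv, rfl⟩
    · obtain ⟨⟨h₁, h₂⟩, h₃, h₄⟩ := subset_box i hp
      exact ⟨⟨h₁, by nlinarith⟩, h₃, by nlinarith⟩
    · obtain ⟨⟨h₁, h₂⟩, h₃, h₄⟩ := subset_box i hx
      obtain ⟨⟨v₁, v₂⟩, v₃, v₄⟩ := hV hv
      exact ⟨⟨by positivity, by nlinarith⟩, by positivity, by nlinarith⟩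

theorem injOn_digit_map (i : ℕ) :
    Set.InjOn (fun q : (ℤ × ℤ) × (ℤ × ℤ) => (q.1.1 + c ^ i * q.2.1, q.1.2 + c ^ i * q.2.2))
      (stage c V i ×ˢ V) := by
  rintro ⟨⟨x₁, x₂⟩, v₁, v₂⟩ ⟨hx, -⟩ ⟨⟨x₁', x₂'⟩, v₁', v₂'⟩ ⟨hx', -⟩ heq
  obtain ⟨hx₁, hx₂⟩ := subset_box hc hV i hx
  obtain ⟨hx₁', hx₂'⟩ := subset_box hc hV i hx'
  simp only [Prod.mk.injEq] at heq ⊢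
  obtain ⟨rfl, rfl⟩ := Int.eq_and_eq_of_add_mul_eq_add_mul (pow_pos hc i) hx₁ hx₁' heq.1
  obtain ⟨rfl, rfl⟩ := Int.eq_and_eq_of_add_mul_eq_add_mul (pow_pos hc i) hx₂ hx₂' heq.2
  simp

theorem ncard_eq (h0 : ((0, 0) : ℤ × ℤ) ∈ V) : ∀ i, (stage c V i).ncard = V.ncard ^ i
  | 0 => by simp [stage]
  | i + 1 => by
    rw [succ_eq_image h0, (injOn_digit_map hc hV i).ncard_image, Set.ncard_prod,
      ncard_eq h0 i, pow_succ]

theorem finite (i : ℕ) : (stage c V i).Finite :=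
  ((Set.finite_Ico _ _).prod (Set.finite_Ico _ _)).subset (subset_box hc hV i)

theorem mem_of_mem_succ {j : ℕ} {p : ℤ × ℤ} (hp : p ∈ stage c V (j + 1))
    (hpj : (p.1.natAbs + p.2.natAbs : ℤ) < c ^ j) : p ∈ stage c V j := by
  rcases hp with hp | ⟨x, hx, ⟨v₁, v₂⟩, hv, rfl⟩
  · exact hp
  obtain ⟨⟨hx₁, -⟩, hx₂, -⟩ := subset_box hc hV j hx
  obtain ⟨⟨hv₁, -⟩, hv₂, -⟩ := hV hv
  obtain ⟨rfl, rfl⟩ | hv0 : (v₁ = 0 ∧ v₂ = 0) ∨ 1 ≤ v₁ + v₂ := by omega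
  · simpa using hx
  · dsimp only at hpj
    have := mul_nonneg (pow_pos hc j).le hv₁
    have := mul_nonneg (pow_pos hc j).le hv₂
    have : c ^ j ≤ c ^ j * v₁ + c ^ j * v₂ := by nlinarith [pow_pos hc j]
    omega

theorem mem_of_mem_add {i d : ℕ} {p : ℤ × ℤ} (hp : p ∈ stage c V (i + d))
    (hpi : (p.1.natAbs + p.2.natAbs : ℤ) < c ^ i) : p ∈ stage c V i := by
  induction d with
  | zero => exact hp
  | succ d ih =>
    refine ih (mem_of_mem_succ hc hV hp (hpi.trans_le ?_))
    exact pow_le_pow_right₀ (by omega) (Nat.le_add_right i d)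

end stage

section ballSet

variable {c : ℤ} {V : Set (ℤ × ℤ)} (hc : 0 < c)
  (hV : V ⊆ Set.Icc (0 : ℤ) (c - 1) ×ˢ Set.Icc (0 : ℤ) (c - 1))
include hc hV

theorem ballSet_iUnion_stage_subset {i n : ℕ} (hn : (n : ℤ) < c ^ i) :
    ballSet (⋃ j, stage c V j) n ⊆ stage c V i := by
  rintro p ⟨hp, hpn⟩
  obtain ⟨j, hj⟩ := Set.mem_iUnion.mp hp
  rcases le_total j i with hji | hij
  · exact stage.monotone hji hj
  · obtain ⟨d, rfl⟩ := Nat.exists_eq_add_of_le hij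
    exact stage.mem_of_mem_add hc hV hj (by omega)

theorem stage_subset_ballSet_iUnion {i n : ℕ} (hn : 2 * c ^ i ≤ n + 2) :
    stage c V i ⊆ ballSet (⋃ j, stage c V j) n := by
  intro p hp
  obtain ⟨⟨h₁, h₂⟩, h₃, h₄⟩ := stage.subset_box hc hV i hp
  exact ⟨Set.mem_iUnion.mpr ⟨i, hp⟩, by omega⟩

end ballSet

theorem ncard_ballSet_iUnion_stage_bounds {c : ℕ} (hc : 1 < c) {V : Set (ℤ × ℤ)}
    (hV : V ⊆ Set.Icc (0 : ℤ) (c - 1) ×ˢ Set.Icc (0 : ℤ) (c - 1))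
    (h0 : ((0, 0) : ℤ × ℤ) ∈ V) (n : ℕ) :
    V.ncard ^ (Nat.log c n - 1) ≤ (ballSet (⋃ j, stage c V j) n).ncard ∧
      (ballSet (⋃ j, stage c V j) n).ncard ≤ V.ncard ^ (Nat.log c n + 1) := by
  have hc₀ : (0 : ℤ) < c := by omega
  set k := Nat.log c n
  have hlt : n < c ^ (k + 1) := Nat.lt_pow_succ_log_self hc n
  have hle : 2 * c ^ (k - 1) ≤ n + 2 := by
    rcases Nat.eq_zero_or_pos k with hk | hk
    · simp [hk]
    · calc 2 * c ^ (k - 1) ≤ c * c ^ (k - 1) := Nat.mul_le_mul_right _ hc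
        _ = c ^ k := by rw [← pow_succ', Nat.sub_add_cancel hk]
        _ ≤ n := Nat.pow_log_le_self c (by rintro rfl; simp [k] at hk)
        _ ≤ n + 2 := by omega
  have hsub := ballSet_iUnion_stage_subset hc₀ hV (i := k + 1) (n := n) (by exact_mod_cast hlt)
  have hsup := stage_subset_ballSet_iUnion hc₀ hV (i := k - 1) (n := n) (by exact_mod_cast hle)
  rw [← stage.ncard_eq hc₀ hV h0, ← stage.ncard_eq hc₀ hV h0]
  exact ⟨Set.ncard_le_ncard hsup ((stage.finite hc₀ hV _).subset hsub),
    Set.ncard_le_ncard hsub (stage.finite hc₀ hV _)⟩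

/-- The zeta-dimension of a `c`-discrete self-similar fractal generated by `V`
equals `log|V| / log c`. -/
theorem zetaDim_fractal (c : ℤ) (hc : 1 < c) (V : Set (ℤ × ℤ))
    (hV : V ⊆ Set.Icc (0 : ℤ) (c - 1) ×ˢ Set.Icc (0 : ℤ) (c - 1))
    (h0 : ((0, 0) : ℤ × ℤ) ∈ V) (hcard : 2 ≤ V.ncard) :
    zetaDim (⋃ i, stage c V i) = Real.logb 2 V.ncard / Real.logb 2 c := by
  lift c to ℕ using (by omega)
  have hc' : 1 < c := by exact_mod_cast hc
  have hlogc : 0 < Real.logb 2 ((c : ℤ) : ℝ) := Real.logb_pos one_lt_two (by exact_mod_cast hc')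
  have hlogV : 0 < Real.logb 2 V.ncard := Real.logb_pos one_lt_two (by exact_mod_cast hcard)
  refine (tendsto_div_of_linear_bounds (k := fun n : ℕ => (Nat.log c n : ℝ)) hlogc hlogV.le
    ((Real.tendsto_logb_atTop one_lt_two).comp tendsto_natCast_atTop_atTop) ?_ ?_).limsup_eq
  · filter_upwards [eventually_ne_atTop 0] with n hn
    simpa using logb_bounds_of_pow_bounds one_lt_two (by omega) (Nat.pow_log_le_self c hn)
      (Nat.lt_pow_succ_log_self hc' n).le
  · refine .of_forall fun n => ?_
    obtain ⟨hlow, hup⟩ := ncard_ballSet_iUnion_stage_bounds hc' hV h0 n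
    obtain ⟨hlog_low, hlog_up⟩ := logb_bounds_of_pow_bounds one_lt_two (by omega) hlow hup
    refine ⟨le_trans ?_ hlog_low, by exact_mod_cast hlog_up⟩
    gcongr
    -- `Nat.log c n - 1` is truncated subtraction
    rcases Nat.log c n with _ | k <;> simp
end

section
/- Let X be a c-discrete self-similar fractal generated by V with (0,0), (0,c-1), (c-1,0) ∈ V, V ∩ ({1,…,c-1}×{c-1}) = ∅, and V ∩ ({c-1}×{1,…,c-1}) = ∅. For k ∈ ℕ set r_k = c^k·(c(c-1), c-1) and B_k = X ∩ ({0,…,c^k-1}² + r_k). Then for all k ≠ k′, B_k is not a translate of B_{k′}. -/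
/-- The point `r_k = c^k·(c(c-1), c-1)`. -/
def rpt (c : ℤ) (k : ℕ) : ℤ × ℤ := (c ^ k * (c * (c - 1)), c ^ k * (c - 1))

/-- `B_k = X ∩ ({0,…,c^k-1}² + r_k)`. -/
def Bset (c : ℤ) (V : Set (ℤ × ℤ)) (k : ℕ) : Set (ℤ × ℤ) :=
  (⋃ i, stage c V i) ∩
    ((fun p : ℤ × ℤ => p + rpt c k) ''
      (Set.Icc (0 : ℤ) (c ^ k - 1) ×ˢ Set.Icc (0 : ℤ) (c ^ k - 1)))

section Stage

variable {c : ℤ} {V : Set (ℤ × ℤ)}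

lemma stage_succ_mem {i : ℕ} {x v : ℤ × ℤ} (hx : x ∈ stage c V i) (hv : v ∈ V) :
    (x.1 + c ^ i * v.1, x.2 + c ^ i * v.2) ∈ stage c V (i + 1) :=
  Or.inr ⟨x, hx, v, hv, rfl⟩

lemma stage_mono : Monotone (stage c V) :=
  monotone_nat_of_le_succ fun _ => Set.subset_union_left

lemma zero_mem_stage (k : ℕ) : ((0, 0) : ℤ × ℤ) ∈ stage c V k :=
  stage_mono (Nat.zero_le k) rfl

lemma pow_sub_one_zero_mem_stage (hc0 : ((c - 1, 0) : ℤ × ℤ) ∈ V) (k : ℕ) :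
    ((c ^ k - 1, 0) : ℤ × ℤ) ∈ stage c V k := by
  induction k with
  | zero => simp [stage]
  | succ n ih =>
    convert stage_succ_mem ih hc0 using 2 <;> ring

lemma add_rpt_mem_stage (h0c : ((0, c - 1) : ℤ × ℤ) ∈ V) (hc0 : ((c - 1, 0) : ℤ × ℤ) ∈ V)
    {k : ℕ} {p : ℤ × ℤ} (hp : p ∈ stage c V k) : p + rpt c k ∈ stage c V (k + 2) := by
  convert stage_succ_mem (stage_succ_mem hp h0c) hc0 using 2 <;>
    simp only [rpt, Prod.fst_add, Prod.snd_add] <;> ring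

lemma add_rpt_mem_Bset (h0c : ((0, c - 1) : ℤ × ℤ) ∈ V) (hc0 : ((c - 1, 0) : ℤ × ℤ) ∈ V)
    {k : ℕ} {p : ℤ × ℤ} (hp : p ∈ stage c V k)
    (hbox : p ∈ Set.Icc (0 : ℤ) (c ^ k - 1) ×ˢ Set.Icc (0 : ℤ) (c ^ k - 1)) :
    p + rpt c k ∈ Bset c V k :=
  ⟨Set.mem_iUnion.2 ⟨k + 2, add_rpt_mem_stage h0c hc0 hp⟩, p, hbox, rfl⟩

lemma fst_mem_Icc_of_mem_Bset {k : ℕ} {p : ℤ × ℤ} (hp : p ∈ Bset c V k) :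
    p.1 ∈ Set.Icc (rpt c k).1 ((rpt c k).1 + (c ^ k - 1)) := by
  obtain ⟨-, q, ⟨⟨hq₀, hq₁⟩, -⟩, rfl⟩ := hp
  constructor <;> simp only [Prod.fst_add] <;> linarith

end Stage

lemma fst_sub_fst_le_of_eq_image_add {S T : Set (ℤ × ℤ)} {a : ℤ × ℤ} {m M : ℤ}
    (hST : S = (fun p => p + a) '' T) (hT : ∀ q ∈ T, q.1 ∈ Set.Icc m M)
    {p p' : ℤ × ℤ} (hp : p ∈ S) (hp' : p' ∈ S) : p'.1 - p.1 ≤ M - m := by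
  rw [hST] at hp hp'
  obtain ⟨q, hq, rfl⟩ := hp
  obtain ⟨q', hq', rfl⟩ := hp'
  have := hT q hq
  have := hT q' hq'
  simp only [Prod.fst_add, Set.mem_Icc] at *
  linarith

lemma pow_le_pow_of_Bset_eq_image_add {c : ℤ} (hc : 1 < c) {V : Set (ℤ × ℤ)}
    (h0c : ((0, c - 1) : ℤ × ℤ) ∈ V) (hc0 : ((c - 1, 0) : ℤ × ℤ) ∈ V)
    {k k' : ℕ} {a : ℤ × ℤ} (h : Bset c V k = (fun p => p + a) '' Bset c V k') :
    c ^ k ≤ c ^ k' := by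
  have hpow : 0 ≤ c ^ k - 1 := sub_nonneg.2 (one_le_pow₀ hc.le)
  have hleft := add_rpt_mem_Bset h0c hc0 (zero_mem_stage k) (by simpa using hpow)
  have hright := add_rpt_mem_Bset h0c hc0 (pow_sub_one_zero_mem_stage hc0 k) (by simpa using hpow)
  have := fst_sub_fst_le_of_eq_image_add h (fun _ => fst_mem_Icc_of_mem_Bset) hleft hright
  simp only [Prod.fst_add, add_sub_cancel_right, zero_add] at this
  linarith

theorem Bset_not_translate_general (c : ℤ) (hc : 1 < c) (V : Set (ℤ × ℤ))
    (h0c : ((0, c - 1) : ℤ × ℤ) ∈ V)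
    (hc0 : ((c - 1, 0) : ℤ × ℤ) ∈ V) :
    ∀ k k' : ℕ, k ≠ k' →
      ¬ ∃ a : ℤ × ℤ, Bset c V k = (fun p : ℤ × ℤ => p + a) '' Bset c V k' := by
  rintro k k' hne ⟨a, h⟩
  have h' : Bset c V k' = (fun p => p + -a) '' Bset c V k := by
    rw [h, Set.image_image]
    simp
  exact hne <| pow_right_injective₀ (by omega) hc.ne' <|
    (pow_le_pow_of_Bset_eq_image_add hc h0c hc0 h).antisymm
      (pow_le_pow_of_Bset_eq_image_add hc h0c hc0 h')

/-- For a pinch-point fractal, the sets `B_k` are pairwise non-translates. -/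
theorem Bset_not_translate (c : ℤ) (hc : 1 < c) (V : Set (ℤ × ℤ))
    (hV : V ⊆ Set.Icc (0 : ℤ) (c - 1) ×ˢ Set.Icc (0 : ℤ) (c - 1))
    (h00 : ((0, 0) : ℤ × ℤ) ∈ V) (h0c : ((0, c - 1) : ℤ × ℤ) ∈ V)
    (hc0 : ((c - 1, 0) : ℤ × ℤ) ∈ V)
    (htop : V ∩ (Set.Icc (1 : ℤ) (c - 1) ×ˢ ({c - 1} : Set ℤ)) = ∅)
    (hright : V ∩ (({c - 1} : Set ℤ) ×ˢ Set.Icc (1 : ℤ) (c - 1)) = ∅) :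
    ∀ k k' : ℕ, k ≠ k' →
      ¬ ∃ a : ℤ × ℤ, Bset c V k = (fun p : ℤ × ℤ => p + a) '' Bset c V k' :=
  Bset_not_translate_general c hc V h0c hc0
end
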